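/- Let Y be a Banach space and f : X → Y μ-measurable with ‖f‖ μ-integrable on X, fix ε > 0, λ ≥ 1, and a μ-a.e. λ-Morse cover 𝒮 of X. Let Ω be an open ball about the origin large enough that ∫_{X\Ω} ‖f‖ dμ < ε. Then there is a gauge function δ : Ω → (0,1] such that for every countably infinite sequence ⟨S_i(x_i)⟩ of δ-fine sets from 𝒮, each contained in Ω, that is μ-exhausting of Ω, there exists m ∈ ℕ such that for all n ≥ m: ‖∫_X f dμ − Σ_{i=1}^n f(x_i)·μ(S_i)‖ ≤ ∫_X ‖f(y) − Σ_{i=1}^n f(x_i)χ_{S_i}(y)‖ dμ(y) < 3ε, where ∫_X f dμ is the Bochner integral of f. -/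

import Mathlib

open MeasureTheory Set Metric Filter

/-- `S` is a `λ`-Morse set with tag `a`: for some `r > 0`, `B(a,r) ⊆ S ⊆ B(a,λr)`
(closed balls) and `S` is starlike with respect to `B(a,r)`. -/
def IsMorseSet {X : Type*} [NormedAddCommGroup X] [NormedSpace ℝ X]
    (lam : ℝ) (a : X) (S : Set X) : Prop :=
  ∃ r > (0:ℝ), Metric.closedBall a r ⊆ S ∧ S ⊆ Metric.closedBall a (lam * r) ∧
    ∀ y ∈ Metric.closedBall a r, ∀ x ∈ S, segment ℝ y x ⊆ S

/-- `𝒮` (a collection of tagged sets) is a fine, measurable, `λ`-Morse cover of `Ω`: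
every member is a measurable λ-Morse subset of `Ω` with the indicated tag, and every point
of `Ω` is the tag of sets of `𝒮` of arbitrarily small diameter. -/
def IsFineMorseCover {X : Type*} [NormedAddCommGroup X] [NormedSpace ℝ X] [MeasurableSpace X]
    (lam : ℝ) (Ω : Set X) (𝒮 : Set (X × Set X)) : Prop :=
  (∀ p ∈ 𝒮, IsMorseSet lam p.1 p.2 ∧ MeasurableSet p.2 ∧ p.2 ⊆ Ω) ∧
  ∀ a ∈ Ω, ∀ ε > (0:ℝ), ∃ S : Set X, (a, S) ∈ 𝒮 ∧ Metric.diam S < ε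

/-- The (finite or countably infinite) sequence of tagged sets `T` indexed by `I ⊆ ℕ`
is `μ`-exhausting of `Ω` within the collection `𝒮`: its members belong to `𝒮`,
are pairwise disjoint, and cover all but a `μ`-null subset of `Ω`. -/
def IsExhausting {X : Type*} [MeasurableSpace X] (μ : Measure X) (Ω : Set X)
    (𝒮 : Set (X × Set X)) (I : Set ℕ) (T : ℕ → X × Set X) : Prop :=
  (∀ i ∈ I, T i ∈ 𝒮) ∧
  (∀ i ∈ I, ∀ j ∈ I, i ≠ j → Disjoint (T i).2 (T j).2) ∧
  μ (Ω \ ⋃ i ∈ I, (T i).2) = 0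

/-- `𝒮` is a `μ`-a.e. `λ`-Morse cover of `Ω`: it is a fine measurable λ-Morse cover and,
for every nonempty open `U ⊆ Ω` and every gauge `δ : U → (0,1]`, there is a sequence of
`δ`-fine sets from `𝒮`, each contained in `U`, that is `μ`-exhausting of `U`. -/
def IsAEMorseCover {X : Type*} [NormedAddCommGroup X] [NormedSpace ℝ X] [MeasurableSpace X]
    (μ : Measure X) (lam : ℝ) (Ω : Set X) (𝒮 : Set (X × Set X)) : Prop :=
  IsFineMorseCover lam Ω 𝒮 ∧
  ∀ U : Set X, IsOpen U → U.Nonempty → U ⊆ Ω →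
    ∀ δ : X → ℝ, (∀ x ∈ U, δ x ∈ Set.Ioc (0:ℝ) 1) →
      ∃ I T, IsExhausting μ U 𝒮 I T ∧
        ∀ i ∈ I, (T i).2 ⊆ U ∧ (T i).2 ⊆ Metric.closedBall (T i).1 (δ (T i).1)

/-- `f` is `μ`-measurable: there is a sequence of simple functions converging to `f`
`μ`-almost everywhere. -/
def MuMeasurable {X Y : Type*} [MeasurableSpace X] [NormedAddCommGroup Y]
    (μ : Measure X) (f : X → Y) : Prop :=
  ∃ F : ℕ → MeasureTheory.SimpleFunc X Y,
    ∀ᵐ x ∂μ, Filter.Tendsto (fun n => F n x) Filter.atTop (nhds (f x))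

/-- `a` is a point of approximate continuity of `f` (relative to the tagged collection
`𝒮`): for all `ε, η > 0` there is `R > 0` such that every `S ∈ 𝒮` with tag `a` contained
in `B(a,R)` satisfies `μ {x ∈ S | ‖f a - f x‖ > η} ≤ ε · μ S`. -/
def IsApproxContPt {X Y : Type*} [NormedAddCommGroup X] [MeasurableSpace X]
    [NormedAddCommGroup Y] (μ : Measure X) (𝒮 : Set (X × Set X)) (f : X → Y) (a : X) : Prop :=
  ∀ ε > (0:ℝ), ∀ η > (0:ℝ), ∃ R > (0:ℝ), ∀ S : Set X, (a, S) ∈ 𝒮 →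
    S ⊆ Metric.closedBall a R →
    μ {x ∈ S | η < ‖f a - f x‖} ≤ ENNReal.ofReal ε * μ S

/-- `a` is a Lebesgue point of `g` with respect to the value `c` (relative to the tagged
collection `𝒮`): for every `ε > 0` there is `R > 0` such that every `S ∈ 𝒮` with tag `a`
contained in `B(a,R)` satisfies `∫_S ‖g x - c‖ dμ ≤ ε · μ S`. -/
def IsLebesguePt {X Y : Type*} [NormedAddCommGroup X] [MeasurableSpace X]
    [NormedAddCommGroup Y] (μ : Measure X) (𝒮 : Set (X × Set X)) (g : X → Y) (a : X)
    (c : Y) : Prop :=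
  ∀ ε > (0:ℝ), ∃ R > (0:ℝ), ∀ S : Set X, (a, S) ∈ 𝒮 → S ⊆ Metric.closedBall a R →
    ∫⁻ x in S, ‖g x - c‖₊ ∂μ ≤ ENNReal.ofReal ε * μ S

open scoped ENNReal NNReal Topology
open Function

/-!
McShane's argument that Lebesgue integrable functions are gauge integrable. Approximate `f` in
`L¹` by a simple function `g` and split `∫_{S_i} ‖f - f(x_i)‖` into `∫_{S_i} ‖f - g‖`,
`∫_{S_i} ‖g - g(x_i)‖` and `‖f(x_i) - g(x_i)‖ μ(S_i)`. The first terms sum to at most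
`‖f - g‖₁`. For the second, outer regularity gives open sets around the fibres of `g` exceeding
them by little measure, and the gauge keeps each `S_i` inside the one of its tag. For the third,
the same is done with the level sets `{⌊‖f - g‖ / η⌋₊ = k}`, which bounds the Riemann sums of
`‖f - g‖` by its integral plus a small error. Finally an exhausting sequence eventually carries
all but `ε` of `∫_Ω ‖f‖`, and `∫_{X \ Ω} ‖f‖ < ε`, which gives `3ε`.
-/

section Packings

variable {X : Type*} [PseudoMetricSpace X] [MeasurableSpace X] {Ω : Set X}

/-- As for McShane partitions, a tag need not lie in its set. -/
def IsTaggedPacking (Ω : Set X) (T : ℕ → X × Set X) : Prop :=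
  Pairwise (Disjoint on fun i => (T i).2) ∧ ∀ i, MeasurableSet (T i).2 ∧ (T i).1 ∈ Ω

def finePackings (Ω : Set X) : Filter (ℕ → X × Set X) :=
  ⨅ δ : {δ : X → ℝ // ∀ x ∈ Ω, 0 < δ x},
    𝓟 {T | IsTaggedPacking Ω T ∧ ∀ i, (T i).2 ⊆ closedBall (T i).1 (δ.1 (T i).1)}

theorem eventually_finePackings_iff {P : (ℕ → X × Set X) → Prop} :
    (∀ᶠ T in finePackings Ω, P T) ↔ ∃ δ : X → ℝ, (∀ x ∈ Ω, 0 < δ x) ∧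
      ∀ T, IsTaggedPacking Ω T → (∀ i, (T i).2 ⊆ closedBall (T i).1 (δ (T i).1)) → P T := by
  have : Nonempty {δ : X → ℝ // ∀ x ∈ Ω, 0 < δ x} := ⟨⟨1, fun _ _ => one_pos⟩⟩
  rw [finePackings, Filter.eventually_iff, mem_iInf_of_directed]
  · simp only [mem_principal, Subtype.exists, ofPred_subset, and_imp, exists_prop, mem_ofPred_eq]
  · rintro ⟨δ₁, h₁⟩ ⟨δ₂, h₂⟩
    refine ⟨⟨fun x => min (δ₁ x) (δ₂ x), fun x hx => lt_min (h₁ x hx) (h₂ x hx)⟩, ?_, ?_⟩ <;>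
      refine principal_mono.2 fun T hT => ⟨hT.1, fun i => (hT.2 i).trans
        (closedBall_subset_closedBall ?_)⟩
    exacts [min_le_left _ _, min_le_right _ _]

theorem eventually_isTaggedPacking : ∀ᶠ T in finePackings Ω, IsTaggedPacking Ω T :=
  eventually_finePackings_iff.2 ⟨1, fun _ _ => one_pos, fun _ hT _ => hT⟩

theorem eventually_finePackings_subset {U : X → Set X} (hU : ∀ x ∈ Ω, U x ∈ 𝓝 x) :
    ∀ᶠ T in finePackings Ω, ∀ i, (T i).2 ⊆ U (T i).1 := by
  choose! δ hδ hδU using fun x hx => nhds_basis_closedBall.mem_iff.1 (hU x hx)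
  exact eventually_finePackings_iff.2
    ⟨δ, hδ, fun T hT hTδ i => (hTδ i).trans (hδU _ (hT.2 i).2)⟩

end Packings

section MeasureEstimates

variable {X Y ι κ : Type*} [MeasurableSpace X] [NormedAddCommGroup Y] {μ : Measure X} [Countable ι]
  {S : ι → Set X}

theorem tsum_measure_inter_le (hS : ∀ i, MeasurableSet (S i)) (hd : Pairwise (Disjoint on S))
    (W : Set X) : ∑' i, μ (S i ∩ W) ≤ μ W := by
  simp_rw [← Measure.restrict_apply (hS _), ← measure_iUnion hd hS]
  exact (measure_mono (subset_univ _)).trans_eq (Measure.restrict_apply_univ W)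

theorem tsum_mul_measure_inter_le_tsum (hS : ∀ i, MeasurableSet (S i))
    (hd : Pairwise (Disjoint on S)) (k : ι → κ) (c : κ → ℝ≥0∞) (W : κ → Set X) :
    ∑' i, c (k i) * μ (S i ∩ W (k i)) ≤ ∑' j, c j * μ (W j) := by
  classical
  calc ∑' i, c (k i) * μ (S i ∩ W (k i))
      = ∑' j, ∑' i, if j = k i then c j * μ (S i ∩ W j) else 0 := by
        rw [ENNReal.tsum_comm]
        exact tsum_congr fun i => (tsum_ite_eq (k i) fun j => c j * μ (S i ∩ W j)).symm
    _ ≤ ∑' j, c j * ∑' i, μ (S i ∩ W j) := by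
        refine ENNReal.tsum_le_tsum fun j => ?_
        rw [← ENNReal.tsum_mul_left]
        exact ENNReal.tsum_le_tsum fun i => by split_ifs <;> simp
    _ ≤ ∑' j, c j * μ (W j) := by
        gcongr with j
        exact tsum_measure_inter_le hS hd (W j)

theorem MeasureTheory.SimpleFunc.setLIntegral_enorm_sub_le (g : SimpleFunc X Y) {C : ℝ}
    (hC : ∀ x, ‖g x‖ ≤ C) (S : Set X) (a : X) :
    ∫⁻ y in S, ‖g y - g a‖ₑ ∂μ ≤ ENNReal.ofReal (2 * C) * μ (S \ g ⁻¹' {g a}) := by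
  have hfib : MeasurableSet (g ⁻¹' {g a})ᶜ := (g.measurableSet_fiber _).compl
  calc ∫⁻ y in S, ‖g y - g a‖ₑ ∂μ
      ≤ ∫⁻ y in S, (g ⁻¹' {g a})ᶜ.indicator (fun _ => ENNReal.ofReal (2 * C)) y ∂μ := by
        refine MeasureTheory.lintegral_mono fun y => ?_
        by_cases hy : g y = g a
        · simp [hy]
        · rw [indicator_of_mem hy, ← ofReal_norm]
          exact ENNReal.ofReal_le_ofReal
            ((norm_sub_le (g y) (g a)).trans (by linarith [hC y, hC a]))
    _ = ENNReal.ofReal (2 * C) * μ (S \ g ⁻¹' {g a}) := by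
        rw [lintegral_indicator_const hfib, Measure.restrict_apply hfib, inter_comm, Set.sdiff_eq]

theorem tsum_mul_measure_inter_floor_preimage_le {h : X → ℝ≥0} (hh : AEMeasurable h μ)
    (η : ℝ≥0) (Ω : Set X) :
    ∑' k : ℕ, (((k + 1) * η : ℝ≥0) : ℝ≥0∞) * μ (Ω ∩ (fun x => ⌊h x / η⌋₊) ⁻¹' {k})
      ≤ ∫⁻ x in Ω, h x ∂μ + η * μ Ω := by
  set w : ℕ → ℝ≥0∞ := fun k => ((k + 1) * η : ℝ≥0)
  set h' := hh.mk h
  set q : X → ℕ := fun x => ⌊h' x / η⌋₊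
  have hq : Measurable q := (hh.measurable_mk.div_const η).nat_floor
  calc ∑' k, w k * μ (Ω ∩ (fun x => ⌊h x / η⌋₊) ⁻¹' {k})
      ≤ ∑' k, w k * μ.restrict Ω (q ⁻¹' {k}) := by
        refine ENNReal.tsum_le_tsum fun k => mul_le_mul_right ?_ _
        rw [Measure.restrict_apply (hq (measurableSet_singleton k))]
        exact measure_mono_ae
          (hh.ae_eq_mk.mono fun x (hx : h x = h' x) hxk => ⟨by simpa [q, ← hx] using hxk.2, hxk.1⟩)
    _ = ∫⁻ x in Ω, w (q x) ∂μ := by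
        rw [← lintegral_map (measurable_from_nat (f := w)) hq, lintegral_countable']
        simp_rw [Measure.map_apply hq (measurableSet_singleton _)]
    _ ≤ ∫⁻ x in Ω, (h' x + η : ℝ≥0∞) ∂μ := by
        refine lintegral_mono fun x => ?_
        rw [← ENNReal.coe_add, ENNReal.coe_le_coe, add_mul, one_mul]
        gcongr
        rcases eq_or_ne η 0 with rfl | hη
        · simp
        exact (le_div_iff₀ (pos_iff_ne_zero.2 hη)).1 (Nat.floor_le (by positivity))
    _ = ∫⁻ x in Ω, h x ∂μ + η * μ Ω := by
        rw [lintegral_add_right _ measurable_const, setLIntegral_const, mul_comm]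
        exact congrArg (· + _) (lintegral_congr_ae
          (ae_restrict_of_ae (hh.ae_eq_mk.mono fun x hx => congrArg ((↑) : ℝ≥0 → ℝ≥0∞) hx.symm)))

end MeasureEstimates

section Gauges

variable {X Y : Type*} [PseudoMetricSpace X] [MeasurableSpace X] [NormedAddCommGroup Y]
  {μ : Measure X} [μ.OuterRegular] {Ω : Set X}

theorem MeasureTheory.SimpleFunc.eventually_tsum_setLIntegral_enorm_sub_le (g : SimpleFunc X Y)
    (hΩm : MeasurableSet Ω) (hΩ : μ Ω ≠ ∞) {ε : ℝ≥0∞} (hε : ε ≠ 0) :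
    ∀ᶠ T in finePackings Ω, ∑' i, ∫⁻ y in (T i).2, ‖g y - g (T i).1‖ₑ ∂μ ≤ ε := by
  obtain ⟨C, hC⟩ := g.exists_forall_norm_le
  set K := ENNReal.ofReal (2 * C)
  obtain ⟨κ, hκ0, hκ⟩ := ENNReal.exists_nnreal_pos_mul_lt
    (a := g.range.card * K) (ENNReal.mul_ne_top (ENNReal.natCast_ne_top _) ENNReal.ofReal_ne_top) hε
  have hV : ∀ c, ∃ V ⊇ g ⁻¹' {c} ∩ Ω, IsOpen V ∧ μ (V \ (g ⁻¹' {c} ∩ Ω)) ≤ κ := fun c => by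
    obtain ⟨V, hAV, hV, -, hVκ⟩ := ((g.measurableSet_fiber c).inter hΩm).exists_isOpen_sdiff_lt
      (measure_ne_top_of_subset inter_subset_right hΩ) (ENNReal.coe_ne_zero.2 hκ0.ne')
    exact ⟨V, hAV, hV, hVκ.le⟩
  choose V hAV hVo hVκ using hV
  set W := ⋃ c ∈ g.range, V c \ (g ⁻¹' {c} ∩ Ω)
  have hW : μ W ≤ g.range.card * κ := (measure_biUnion_finset_le _ _).trans
    ((Finset.sum_le_card_nsmul _ _ _ fun c _ => hVκ c).trans_eq (nsmul_eq_mul _ _))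
  filter_upwards [eventually_isTaggedPacking, eventually_finePackings_subset fun x hx =>
    (hVo (g x)).mem_nhds (hAV (g x) ⟨rfl, hx⟩)] with T hT hTV
  have hTW : ∀ i, (T i).2 \ g ⁻¹' {g (T i).1} ⊆ (T i).2 ∩ W := fun i y hy =>
    ⟨hy.1, mem_biUnion (g.mem_range_self _) ⟨hTV i hy.1, fun h => hy.2 h.1⟩⟩
  calc ∑' i, ∫⁻ y in (T i).2, ‖g y - g (T i).1‖ₑ ∂μ
      ≤ ∑' i, K * μ ((T i).2 ∩ W) := ENNReal.tsum_le_tsum fun i =>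
        (g.setLIntegral_enorm_sub_le hC _ _).trans (mul_le_mul_right (measure_mono (hTW i)) _)
    _ = K * ∑' i, μ ((T i).2 ∩ W) := ENNReal.tsum_mul_left
    _ ≤ K * μ W := mul_le_mul_right (tsum_measure_inter_le (fun i => (hT.2 i).1) hT.1 W) _
    _ ≤ K * (g.range.card * κ) := by gcongr
    _ = κ * (g.range.card * K) := by ring
    _ ≤ ε := hκ.le

theorem eventually_tsum_mul_measure_le_setLIntegral_add {h : X → ℝ≥0} (hh : AEMeasurable h μ)
    (hΩ : μ Ω ≠ ∞) {ε : ℝ≥0∞} (hε : ε ≠ 0) :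
    ∀ᶠ T in finePackings Ω, ∑' i, (h (T i).1 : ℝ≥0∞) * μ (T i).2 ≤ ∫⁻ x in Ω, h x ∂μ + ε := by
  obtain ⟨η, hη0, hη⟩ := ENNReal.exists_nnreal_pos_mul_lt hΩ (ENNReal.half_pos hε).ne'
  obtain ⟨e, he0, he⟩ := ENNReal.exists_pos_sum_of_countable' (ENNReal.half_pos hε).ne' ℕ
  set q : X → ℕ := fun x => ⌊h x / η⌋₊
  set w : ℕ → ℝ≥0∞ := fun k => ((k + 1) * η : ℝ≥0)
  have hw0 : ∀ k, w k ≠ 0 := fun k => by simp [w, hη0.ne']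
  have hV : ∀ k, ∃ V ⊇ Ω ∩ q ⁻¹' {k}, IsOpen V ∧ μ V ≤ μ (Ω ∩ q ⁻¹' {k}) + e k / w k :=
    fun k => exists_isOpen_le_add _ _ (ENNReal.div_pos (he0 k).ne' ENNReal.coe_ne_top).ne'
  choose V hEV hVo hVμ using hV
  filter_upwards [eventually_isTaggedPacking, eventually_finePackings_subset fun x hx =>
    (hVo (q x)).mem_nhds (hEV _ ⟨hx, rfl⟩)] with T hT hTV
  have htag : ∀ x, (h x : ℝ≥0∞) ≤ w (q x) := fun x => ENNReal.coe_le_coe.2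
    ((div_lt_iff₀ hη0).1 (Nat.lt_floor_add_one (h x / η))).le
  calc ∑' i, (h (T i).1 : ℝ≥0∞) * μ (T i).2
      ≤ ∑' i, w (q (T i).1) * μ ((T i).2 ∩ V (q (T i).1)) := ENNReal.tsum_le_tsum fun i => by
        rw [inter_eq_left.2 (hTV i)]
        exact mul_le_mul_left (htag _) _
    _ ≤ ∑' k, w k * μ (V k) := tsum_mul_measure_inter_le_tsum (fun i => (hT.2 i).1) hT.1 _ _ _
    _ ≤ ∑' k, (w k * μ (Ω ∩ q ⁻¹' {k}) + e k) := ENNReal.tsum_le_tsum fun k =>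
        (mul_le_mul_right (hVμ k) _).trans_eq
          (by rw [mul_add, ENNReal.mul_div_cancel (hw0 k) ENNReal.coe_ne_top])
    _ = ∑' k, w k * μ (Ω ∩ q ⁻¹' {k}) + ∑' k, e k := ENNReal.tsum_add
    _ ≤ ∫⁻ x in Ω, h x ∂μ + η * μ Ω + ε / 2 :=
        add_le_add (tsum_mul_measure_inter_floor_preimage_le hh η Ω) he.le
    _ ≤ ∫⁻ x in Ω, h x ∂μ + (ε / 2 + ε / 2) := by
        rw [add_assoc]
        gcongr
    _ = ∫⁻ x in Ω, h x ∂μ + ε := by rw [ENNReal.add_halves]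

theorem MeasureTheory.Integrable.eventually_tsum_setLIntegral_enorm_sub_le {f : X → Y}
    (hf : Integrable f μ) (hΩm : MeasurableSet Ω) (hΩ : μ Ω ≠ ∞) {ε : ℝ≥0∞} (hε : ε ≠ 0) :
    ∀ᶠ T in finePackings Ω, ∑' i, ∫⁻ y in (T i).2, ‖f y - f (T i).1‖ₑ ∂μ ≤ ε := by
  set e := ε / 2 / 2
  have he : e ≠ 0 := (ENNReal.half_pos (ENNReal.half_pos hε).ne').ne'
  obtain ⟨g, hg, -⟩ :=
    (memLp_one_iff_integrable.2 hf).exists_simpleFunc_eLpNorm_sub_lt ENNReal.one_ne_top he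
  simp only [eLpNorm_one_eq_lintegral_enorm, Pi.sub_apply] at hg
  have hfg : AEMeasurable (fun y => ‖f y - g y‖₊) μ :=
    (hf.1.sub g.aestronglyMeasurable).nnnorm.aemeasurable
  filter_upwards [eventually_isTaggedPacking, g.eventually_tsum_setLIntegral_enorm_sub_le hΩm hΩ he,
    eventually_tsum_mul_measure_le_setLIntegral_add hfg hΩ he] with T hT hB hC
  have hsplit : ∀ i, ∫⁻ y in (T i).2, ‖f y - f (T i).1‖ₑ ∂μ
      ≤ ∫⁻ y in (T i).2, ‖f y - g y‖ₑ ∂μ + ∫⁻ y in (T i).2, ‖g y - g (T i).1‖ₑ ∂μ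
        + ‖f (T i).1 - g (T i).1‖₊ * μ (T i).2 := fun i => by
    rw [← lintegral_add_left' (f := fun y => ‖f y - g y‖ₑ) hfg.coe_nnreal_ennreal.restrict,
      ← setLIntegral_const, ← lintegral_add_right _ measurable_const]
    refine MeasureTheory.lintegral_mono fun y => ?_
    have := edist_triangle4 (f y) (g y) (g (T i).1) (f (T i).1)
    rw [edist_comm (g (T i).1)] at this
    simpa only [edist_eq_enorm_sub, enorm_eq_nnnorm] using this
  calc ∑' i, ∫⁻ y in (T i).2, ‖f y - f (T i).1‖ₑ ∂μ
      ≤ ∑' i, ∫⁻ y in (T i).2, ‖f y - g y‖ₑ ∂μ + ∑' i, ∫⁻ y in (T i).2, ‖g y - g (T i).1‖ₑ ∂μ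
        + ∑' i, (‖f (T i).1 - g (T i).1‖₊ : ℝ≥0∞) * μ (T i).2 := by
        rw [← ENNReal.tsum_add, ← ENNReal.tsum_add]
        exact ENNReal.tsum_le_tsum hsplit
    _ ≤ e + e + (e + e) := by
        gcongr
        · rw [← lintegral_iUnion (fun i => (hT.2 i).1) hT.1]
          exact (setLIntegral_le_lintegral _ _).trans hg.le
        · exact hC.trans (add_le_add_left ((setLIntegral_le_lintegral _ _).trans hg.le) _)
    _ = ε := by rw [ENNReal.add_halves, ENNReal.add_halves]

end Gauges

section RiemannSums

variable {X Y : Type*} [MeasurableSpace X] [NormedAddCommGroup Y] {μ : Measure X}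
  {T : ℕ → X × Set X}

theorem norm_integral_sub_sum_smul_le [NormedSpace ℝ Y] [CompleteSpace Y] {f : X → Y}
    (hf : Integrable f μ) (hm : ∀ i, MeasurableSet (T i).2) (hfin : ∀ i, μ (T i).2 ≠ ∞)
    (s : Finset ℕ) :
    ‖∫ y, f y ∂μ - ∑ i ∈ s, (μ (T i).2).toReal • f (T i).1‖
      ≤ ∫ y, ‖f y - ∑ i ∈ s, (T i).2.indicator (fun _ => f (T i).1) y‖ ∂μ := by
  have hind : ∀ i ∈ s, Integrable ((T i).2.indicator fun _ => f (T i).1) μ := fun i _ =>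
    (integrable_indicator_iff (hm i)).2 (integrableOn_const (hfin i))
  calc ‖∫ y, f y ∂μ - ∑ i ∈ s, (μ (T i).2).toReal • f (T i).1‖
      = ‖∫ y, (f y - ∑ i ∈ s, (T i).2.indicator (fun _ => f (T i).1) y) ∂μ‖ := by
        rw [integral_sub hf (integrable_finsetSum s hind), integral_finsetSum s hind]
        simp_rw [integral_indicator_const _ (hm _), Measure.real]
    _ ≤ _ := norm_integral_le_integral_norm _

theorem lintegral_enorm_sub_sum_indicator (f : X → Y) (hd : Pairwise (Disjoint on fun i => (T i).2))
    (hm : ∀ i, MeasurableSet (T i).2) (s : Finset ℕ) :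
    ∫⁻ y, ‖f y - ∑ i ∈ s, (T i).2.indicator (fun _ => f (T i).1) y‖ₑ ∂μ
      = ∑ i ∈ s, ∫⁻ y in (T i).2, ‖f y - f (T i).1‖ₑ ∂μ
        + ∫⁻ y in (⋃ i ∈ s, (T i).2)ᶜ, ‖f y‖ₑ ∂μ := by
  have hU : MeasurableSet (⋃ i ∈ s, (T i).2) := s.measurableSet_biUnion fun i _ => hm i
  rw [← lintegral_add_compl _ hU,
    lintegral_biUnion_finset (fun i _ j _ hij => hd hij) (fun i _ => hm i)]
  congr 1
  · refine Finset.sum_congr rfl fun i hi => setLIntegral_congr_fun (hm i) fun y hy => ?_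
    rw [Finset.sum_eq_single_of_mem i hi fun j _ hji =>
      indicator_of_notMem (disjoint_left.1 (hd hji.symm) hy) _, indicator_of_mem hy]
  · refine setLIntegral_congr_fun hU.compl fun y hy => ?_
    rw [Finset.sum_eq_zero fun i hi => indicator_of_notMem (fun h => hy (mem_biUnion hi h)) _,
      sub_zero]

theorem setLIntegral_compl_biUnion_range_le (F : X → ℝ≥0∞) {Ω : Set X} {S : ℕ → Set X}
    (hΩ : μ (Ω \ ⋃ i, S i) = 0) (n : ℕ) :
    ∫⁻ y in (⋃ i ∈ Finset.range n, S i)ᶜ, F y ∂μ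
      ≤ ∫⁻ y in Ωᶜ, F y ∂μ + ∑' i, ∫⁻ y in S (i + n), F y ∂μ := by
  have hsub : (⋃ i ∈ Finset.range n, S i)ᶜ ⊆ Ωᶜ ∪ (Ω \ ⋃ i, S i) ∪ ⋃ i, S (i + n) := by
    intro y hy
    by_cases hyΩ : y ∈ Ω
    swap
    · exact Or.inl (Or.inl hyΩ)
    by_cases hyS : y ∈ ⋃ i, S i
    swap
    · exact Or.inl (Or.inr ⟨hyΩ, hyS⟩)
    obtain ⟨j, hj⟩ := mem_iUnion.1 hyS
    have hnj : n ≤ j := by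
      by_contra! h
      exact hy (mem_biUnion (Finset.mem_range.2 h) hj)
    exact Or.inr (mem_iUnion.2 ⟨j - n, by rwa [Nat.sub_add_cancel hnj]⟩)
  calc ∫⁻ y in (⋃ i ∈ Finset.range n, S i)ᶜ, F y ∂μ
      ≤ ∫⁻ y in Ωᶜ ∪ (Ω \ ⋃ i, S i) ∪ ⋃ i, S (i + n), F y ∂μ := lintegral_mono_set hsub
    _ ≤ ∫⁻ y in Ωᶜ, F y ∂μ + ∫⁻ y in Ω \ ⋃ i, S i, F y ∂μ + ∫⁻ y in ⋃ i, S (i + n), F y ∂μ :=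
        (lintegral_union_le _ _ _).trans (add_le_add_left (lintegral_union_le _ _ _) _)
    _ ≤ ∫⁻ y in Ωᶜ, F y ∂μ + ∑' i, ∫⁻ y in S (i + n), F y ∂μ := by
        rw [setLIntegral_measure_zero _ _ hΩ, add_zero]
        gcongr
        exact lintegral_iUnion_le _ _

theorem eventually_lintegral_enorm_sub_sum_indicator_le {f : X → Y} (hf : HasFiniteIntegral f μ)
    (hd : Pairwise (Disjoint on fun i => (T i).2)) (hm : ∀ i, MeasurableSet (T i).2)
    {Ω : Set X} (hΩ : μ (Ω \ ⋃ i, (T i).2) = 0) {c : ℝ≥0∞} (hc : c ≠ 0) :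
    ∀ᶠ n in atTop,
      ∫⁻ y, ‖f y - ∑ i ∈ Finset.range n, (T i).2.indicator (fun _ => f (T i).1) y‖ₑ ∂μ
        ≤ ∑' i, ∫⁻ y in (T i).2, ‖f y - f (T i).1‖ₑ ∂μ + ∫⁻ y in Ωᶜ, ‖f y‖ₑ ∂μ + c := by
  have hsum : ∑' i, ∫⁻ y in (T i).2, ‖f y‖ₑ ∂μ ≠ ∞ := by
    rw [← lintegral_iUnion hm hd]
    exact ((setLIntegral_le_lintegral _ _).trans_lt hf).ne
  filter_upwards [(ENNReal.tendsto_sum_nat_add _ hsum).eventually_lt_const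
    (pos_iff_ne_zero.2 hc)] with n hn
  rw [lintegral_enorm_sub_sum_indicator f hd hm, add_assoc]
  exact add_le_add (ENNReal.sum_le_tsum _)
    ((setLIntegral_compl_biUnion_range_le _ hΩ n).trans (add_le_add_right hn.le _))

end RiemannSums

theorem MuMeasurable.aestronglyMeasurable {X Y : Type*} [MeasurableSpace X]
    [NormedAddCommGroup Y] {μ : Measure X} {f : X → Y} (hf : MuMeasurable μ f) :
    AEStronglyMeasurable f μ := by
  obtain ⟨F, hF⟩ := hf
  exact aestronglyMeasurable_of_tendsto_ae atTop (fun n => (F n).aestronglyMeasurable) hF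

theorem IsMorseSet.mem {X : Type*} [NormedAddCommGroup X] [NormedSpace ℝ X] {lam : ℝ} {a : X}
    {S : Set X} (h : IsMorseSet lam a S) : a ∈ S := by
  obtain ⟨r, hr, hball, -⟩ := h
  exact hball (mem_closedBall_self hr.le)

theorem IsFineMorseCover.isTaggedPacking {X : Type*} [NormedAddCommGroup X] [NormedSpace ℝ X]
    [MeasurableSpace X] {lam : ℝ} {Ω' Ω : Set X} {𝒮 : Set (X × Set X)}
    (h𝒮 : IsFineMorseCover lam Ω' 𝒮) {T : ℕ → X × Set X} (hT : ∀ i, T i ∈ 𝒮 ∧ (T i).2 ⊆ Ω)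
    (hd : ∀ i j, i ≠ j → Disjoint (T i).2 (T j).2) : IsTaggedPacking Ω T :=
  ⟨hd, fun i => ⟨(h𝒮.1 _ (hT i).1).2.1, (hT i).2 (h𝒮.1 _ (hT i).1).1.mem⟩⟩

theorem bochner_integral_morse_riemann_sums_general
    {X Y : Type*} [NormedAddCommGroup X] [NormedSpace ℝ X] [FiniteDimensional ℝ X]
    [MeasurableSpace X] [OpensMeasurableSpace X]
    [NormedAddCommGroup Y] [NormedSpace ℝ Y] [CompleteSpace Y]
    (μ : Measure X) [μ.Regular]
    (f : X → Y) (hf : MuMeasurable μ f)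
    (hint : Integrable (fun x => ‖f x‖) μ)
    (ε : ℝ) (hε : 0 < ε)
    (lam : ℝ)
    (𝒮 : Set (X × Set X)) (h𝒮 : IsAEMorseCover μ lam Set.univ 𝒮)
    (ρ : ℝ) (Ω : Set X) (hΩ : Ω = Metric.ball (0:X) ρ)
    (htail : ∫⁻ y in Ωᶜ, ‖f y‖₊ ∂μ < ENNReal.ofReal ε) :
    ∃ δ : X → ℝ, (∀ x ∈ Ω, δ x ∈ Set.Ioc (0:ℝ) 1) ∧
      ∀ T : ℕ → X × Set X,
        (∀ i : ℕ, T i ∈ 𝒮 ∧ (T i).2 ⊆ Ω ∧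
          (T i).2 ⊆ Metric.closedBall (T i).1 (δ (T i).1)) →
        (∀ i j : ℕ, i ≠ j → Disjoint (T i).2 (T j).2) →
        μ (Ω \ ⋃ i : ℕ, (T i).2) = 0 →
        ∃ m : ℕ, ∀ n ≥ m,
          ‖(∫ y, f y ∂μ) - ∑ i ∈ Finset.range n, (μ (T i).2).toReal • f (T i).1‖
            ≤ (∫ y, ‖f y - ∑ i ∈ Finset.range n,
                Set.indicator (T i).2 (fun _ => f (T i).1) y‖ ∂μ) ∧
          (∫ y, ‖f y - ∑ i ∈ Finset.range n,
                Set.indicator (T i).2 (fun _ => f (T i).1) y‖ ∂μ) < 3 * ε := by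
  have hfi : Integrable f μ := (integrable_norm_iff hf.aestronglyMeasurable).1 hint
  have hΩfin : μ Ω ≠ ∞ := hΩ ▸ measure_ball_lt_top.ne
  have hε' : ENNReal.ofReal ε ≠ 0 := (ENNReal.ofReal_pos.2 hε).ne'
  obtain ⟨δ, hδ, hfine⟩ := eventually_finePackings_iff.1
    (hfi.eventually_tsum_setLIntegral_enorm_sub_le (hΩ ▸ measurableSet_ball) hΩfin hε')
  refine ⟨fun x => min (δ x) 1, fun x hx => ⟨lt_min (hδ x hx) one_pos, min_le_right _ _⟩,
    fun T hT hdisj hnull => ?_⟩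
  have hpack := h𝒮.1.isTaggedPacking (fun i => ⟨(hT i).1, (hT i).2.1⟩) hdisj
  have hm : ∀ i, MeasurableSet (T i).2 := fun i => (hpack.2 i).1
  have hcore := hfine T hpack fun i =>
    (hT i).2.2.trans (closedBall_subset_closedBall (min_le_left _ _))
  obtain ⟨m, hm'⟩ := eventually_atTop.1
    (eventually_lintegral_enorm_sub_sum_indicator_le hfi.2 hdisj hm hnull hε')
  refine ⟨m, fun n hn => ⟨norm_integral_sub_sum_smul_le hfi hm
    (fun i => measure_ne_top_of_subset (hT i).2.1 hΩfin) _, ?_⟩⟩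
  have hsm : AEStronglyMeasurable
      (fun y => f y - ∑ i ∈ Finset.range n, (T i).2.indicator (fun _ => f (T i).1) y) μ :=
    hfi.1.sub (Finset.aestronglyMeasurable_fun_sum _ fun i _ =>
      (stronglyMeasurable_const.indicator (hm i)).aestronglyMeasurable)
  rw [integral_norm_eq_lintegral_enorm hsm]
  refine ENNReal.toReal_lt_of_lt_ofReal ((hm' n hn).trans_lt ?_)
  calc _ < ENNReal.ofReal ε + ENNReal.ofReal ε + ENNReal.ofReal ε :=
        ENNReal.add_lt_add_right ENNReal.ofReal_ne_top
          (ENNReal.add_lt_add_of_le_of_lt (ne_top_of_le_ne_top ENNReal.ofReal_ne_top hcore)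
            hcore htail)
    _ = ENNReal.ofReal (3 * ε) := by
        rw [← ENNReal.ofReal_add hε.le hε.le, ← ENNReal.ofReal_add (by positivity) hε.le]
        ring_nf

/-- Let `Y` be a Banach space, `f : X → Y` `μ`-measurable with `‖f‖` `μ`-integrable,
`ε > 0`, `λ ≥ 1`, and `𝒮` a `μ`-a.e. `λ`-Morse cover of `X`.  Let `Ω` be an open ball
about the origin large enough that `∫_{X \ Ω} ‖f‖ dμ < ε`.  Then there is a gauge
`δ : Ω → (0,1]` such that for every countably infinite sequence `⟨S_i(x_i)⟩` of
`δ`-fine sets from `𝒮`, each contained in `Ω`, that is `μ`-exhausting of `Ω`, there is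
`m ∈ ℕ` such that for all `n ≥ m`,
`‖∫_X f dμ − Σ_{i<n} f(x_i)·μ(S_i)‖ ≤ ∫_X ‖f(y) − Σ_{i<n} f(x_i)χ_{S_i}(y)‖ dμ(y) < 3ε`. -/
theorem bochner_integral_morse_riemann_sums
    {X Y : Type*} [NormedAddCommGroup X] [NormedSpace ℝ X] [FiniteDimensional ℝ X]
    [MeasurableSpace X] [OpensMeasurableSpace X]
    [NormedAddCommGroup Y] [NormedSpace ℝ Y] [CompleteSpace Y]
    (μ : Measure X) [μ.Regular] [μ.IsComplete]
    (f : X → Y) (hf : MuMeasurable μ f)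
    (hint : Integrable (fun x => ‖f x‖) μ)
    (ε : ℝ) (hε : 0 < ε)
    (lam : ℝ) (hlam : 1 ≤ lam)
    (𝒮 : Set (X × Set X)) (h𝒮 : IsAEMorseCover μ lam Set.univ 𝒮)
    (ρ : ℝ) (hρ : 0 < ρ) (Ω : Set X) (hΩ : Ω = Metric.ball (0:X) ρ)
    (htail : ∫⁻ y in Ωᶜ, ‖f y‖₊ ∂μ < ENNReal.ofReal ε) :
    ∃ δ : X → ℝ, (∀ x ∈ Ω, δ x ∈ Set.Ioc (0:ℝ) 1) ∧
      ∀ T : ℕ → X × Set X,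
        (∀ i : ℕ, T i ∈ 𝒮 ∧ (T i).2 ⊆ Ω ∧
          (T i).2 ⊆ Metric.closedBall (T i).1 (δ (T i).1)) →
        (∀ i j : ℕ, i ≠ j → Disjoint (T i).2 (T j).2) →
        μ (Ω \ ⋃ i : ℕ, (T i).2) = 0 →
        ∃ m : ℕ, ∀ n ≥ m,
          ‖(∫ y, f y ∂μ) - ∑ i ∈ Finset.range n, (μ (T i).2).toReal • f (T i).1‖
            ≤ (∫ y, ‖f y - ∑ i ∈ Finset.range n,
                Set.indicator (T i).2 (fun _ => f (T i).1) y‖ ∂μ) ∧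
          (∫ y, ‖f y - ∑ i ∈ Finset.range n,
                Set.indicator (T i).2 (fun _ => f (T i).1) y‖ ∂μ) < 3 * ε :=
  bochner_integral_morse_riemann_sums_general μ f hf hint ε hε lam 𝒮 h𝒮 ρ Ω hΩ htail
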